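/- arXiv:2509.02155 — 5 statements merged into one kernel-verified Lean document; each statement's English description precedes it below -/
import Mathlib

section
/- Let G be an r-regular graph on n vertices and m edges, and let S(G) be its subdivision graph. Then the ABS characteristic polynomial of S(G) satisfies φ(S(G) : μ) = (r/(r+2))^n · μ^{m−n} · ψ(G : (μ²(r+2) − r²)/r), where ψ is the adjacency characteristic polynomial of G. -/
open Matrix Polynomial

/-- The atom-bond sum-connectivity (ABS) matrix of a simple graph. -/
noncomputable def absMatrix {V : Type*} [Fintype V] [DecidableEq V]
    (G : SimpleGraph V) [DecidableRel G.Adj] : Matrix V V ℝ :=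
  Matrix.of fun i j => if G.Adj i j then
    Real.sqrt (1 - 2 / ((G.degree i : ℝ) + (G.degree j : ℝ))) else 0

/-- The subdivision graph `S(G)`: one new vertex inserted on each edge of `G`. -/
def subdivisionGraph {V : Type*} (G : SimpleGraph V) : SimpleGraph (V ⊕ G.edgeSet) where
  Adj x y := match x, y with
    | Sum.inl v, Sum.inr e => v ∈ (e : Sym2 V)
    | Sum.inr e, Sum.inl v => v ∈ (e : Sym2 V)
    | _, _ => False
  symm := ⟨by rintro (v | e) (w | f) h <;> simp_all⟩
  loopless := ⟨by rintro (v | e) h <;> simp_all⟩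

/-!
`S(G)` is bipartite between the vertices and the edges of `G`, and each of its edges joins a vertex
of degree `r` to one of degree `2`. Hence its ABS matrix is `fromBlocks 0 (c • F) (c • Fᵀ) 0` with
`F` the vertex-edge incidence matrix of `G` and `c² = r / (r + 2)`. For such a bipartite block
matrix, `μ^n φ(μ) = μ^m det(μ² - c² F Fᵀ)`, and `F Fᵀ = A(G) + r` because `G` is `r`-regular; it
remains to rescale and shift the argument of the characteristic polynomial of `A(G)`.
-/

namespace Matrix

variable {R : Type*} [CommRing R] {m n : Type*} [Fintype m] [Fintype n] [DecidableEq m]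
  [DecidableEq n]

theorem charpoly_comp (M : Matrix n n R) (p : R[X]) :
    M.charpoly.comp p = (scalar n p - M.map C).det := by
  rw [charpoly, ← coe_compRingHom_apply, RingHom.map_det]
  congr 1
  ext i j
  by_cases h : i = j
  · subst h; simp
  · simp [h]

theorem charpoly_fromBlocks_zero₁₁_zero₂₂ (B : Matrix m n R) (B' : Matrix n m R) :
    X ^ Fintype.card m * (fromBlocks 0 B B' 0).charpoly =
      X ^ Fintype.card n * (B * B').charpoly.comp (X ^ 2) := by
  -- A right factor of determinant `X ^ (|m| + |n|)` makes the characteristic matrix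
  -- block triangular; this replaces the Schur complement, which needs `X` to be invertible.
  have hprod : (fromBlocks 0 B B' 0).charmatrix * fromBlocks (scalar m X) 0 (B'.map C) (scalar n X)
      = fromBlocks (scalar m (X ^ 2) - (B * B').map C) (-(X : R[X]) • B.map C) 0
          (scalar n (X ^ 2)) := by
    rw [charmatrix_fromBlocks, fromBlocks_multiply]
    simp only [charmatrix_zero, Matrix.mul_zero, zero_add, Matrix.neg_mul,
      scalar_apply, ← smul_eq_diagonal_mul, ← smul_eq_mul_diagonal,
      Matrix.map_mul, smul_neg, neg_smul, neg_add_cancel, sub_eq_add_neg,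
      ← sq, diagonal_pow, Pi.pow_def]
  have hdet := congrArg det hprod
  rw [det_mul, det_fromBlocks_zero₁₂, det_fromBlocks_zero₂₁, ← charpoly_comp] at hdet
  simp only [scalar_apply, det_diagonal, Finset.prod_const, Finset.card_univ] at hdet
  refine (isRegular_X_pow (R := R) (Fintype.card n)).left.eq_iff.mp ?_
  rw [charpoly]
  linear_combination hdet

theorem charpoly_smul {K : Type*} [Field K] (M : Matrix n n K) {a : K} (ha : a ≠ 0) :
    (a • M).charpoly = C (a ^ Fintype.card n) * M.charpoly.comp (C a⁻¹ * X) := by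
  have hC : C a * C a⁻¹ = 1 := by rw [← C_mul, mul_inv_cancel₀ ha, C_1]
  rw [charpoly_comp, C_pow, ← det_smul, charpoly, charmatrix]
  congr 1
  refine Matrix.ext fun i j => ?_
  by_cases h : i = j
  · subst h
    simp [mul_sub, ← mul_assoc, hC]
  · simp [h]

end Matrix

namespace SimpleGraph

variable {V : Type*} (G : SimpleGraph V)

section IncMatrix

variable [DecidableEq V] [DecidableRel G.Adj]

/-- The incidence matrix `F(G)`: Mathlib's `incMatrix` with its columns restricted to the edges. -/
def edgeIncMatrix (R : Type*) [Zero R] [One R] : Matrix V G.edgeSet R :=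
  (G.incMatrix R).submatrix id (↑)

theorem edgeIncMatrix_apply {R : Type*} [Zero R] [One R] (v : V) (e : G.edgeSet) :
    G.edgeIncMatrix R v e = if v ∈ (e : Sym2 V) then 1 else 0 := by
  simp [edgeIncMatrix, incMatrix_apply', incidenceSet, e.2]

theorem edgeIncMatrix_mul_transpose {R : Type*} [NonAssocSemiring R] [Fintype V] :
    G.edgeIncMatrix R * (G.edgeIncMatrix R)ᵀ = G.incMatrix R * (G.incMatrix R)ᵀ := by
  ext u w
  simp only [mul_apply, transpose_apply, edgeIncMatrix, submatrix_apply, id]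
  rw [Finset.sum_set_coe (f := fun e => G.incMatrix R u e * G.incMatrix R w e)]
  refine Finset.sum_subset (Finset.subset_univ _) fun e _ he => ?_
  rw [G.incMatrix_of_notMem_incidenceSet fun h => he (by simpa using h.1), zero_mul]

variable {G} in
theorem IsRegularOfDegree.incMatrix_mul_transpose {R : Type*} [Semiring R] [Fintype V] {r : ℕ}
    (hreg : G.IsRegularOfDegree r) :
    G.incMatrix R * (G.incMatrix R)ᵀ = G.adjMatrix R + scalar V (r : R) := by
  rw [G.incMatrix_mul_transpose]
  ext u w
  by_cases h : u = w
  · subst h; simp [hreg u, Matrix.natCast_apply]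
  · simp [h, Matrix.natCast_apply]

end IncMatrix

@[simp]
theorem subdivisionGraph_adj_inl_inr {v : V} {e : G.edgeSet} :
    (subdivisionGraph G).Adj (.inl v) (.inr e) ↔ v ∈ (e : Sym2 V) := Iff.rfl

@[simp]
theorem subdivisionGraph_adj_inr_inl {v : V} {e : G.edgeSet} :
    (subdivisionGraph G).Adj (.inr e) (.inl v) ↔ v ∈ (e : Sym2 V) := Iff.rfl

@[simp]
theorem subdivisionGraph_not_adj_inl_inl {v w : V} : ¬(subdivisionGraph G).Adj (.inl v) (.inl w) :=
  id

@[simp]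
theorem subdivisionGraph_not_adj_inr_inr {e f : G.edgeSet} :
    ¬(subdivisionGraph G).Adj (.inr e) (.inr f) := id

variable [Fintype V] [DecidableEq V] [DecidableRel G.Adj] [DecidableRel (subdivisionGraph G).Adj]

theorem degree_subdivisionGraph_inl (v : V) :
    (subdivisionGraph G).degree (.inl v) = G.degree v := by
  have : (subdivisionGraph G).neighborFinset (.inl v) =
      ((G.incidenceFinset v).subtype (· ∈ G.edgeSet)).map .inr := by
    ext (w | e)
    · simp
    · simp [mem_incidenceFinset, incidenceSet]
  rw [← card_neighborFinset_eq_degree, this, Finset.card_map, Finset.card_subtype,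
    Finset.filter_true_of_mem, card_incidenceFinset_eq_degree]
  exact fun e he => by simpa using G.incidenceFinset_subset v he

theorem degree_subdivisionGraph_inr (e : G.edgeSet) : (subdivisionGraph G).degree (.inr e) = 2 := by
  have : (subdivisionGraph G).neighborFinset (.inr e) = (e : Sym2 V).toFinset.map .inl := by
    ext (w | f) <;> simp [Sym2.mem_toFinset]
  rw [← card_neighborFinset_eq_degree, this, Finset.card_map,
    Sym2.card_toFinset_of_not_isDiag _ (G.not_isDiag_of_mem_edgeSet e.2)]

variable {G} in
theorem IsRegularOfDegree.absMatrix_subdivisionGraph {r : ℕ} (hreg : G.IsRegularOfDegree r) :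
    absMatrix (subdivisionGraph G) =
      fromBlocks 0 (√(r / (r + 2) : ℝ) • G.edgeIncMatrix ℝ)
        (√(r / (r + 2) : ℝ) • (G.edgeIncMatrix ℝ)ᵀ) 0 := by
  have hdeg (v : V) (e : G.edgeSet) : (1 : ℝ) - 2 / ((subdivisionGraph G).degree (.inl v) +
      (subdivisionGraph G).degree (.inr e)) = r / (r + 2) := by
    rw [degree_subdivisionGraph_inl, degree_subdivisionGraph_inr, hreg v]
    field_simp
    ring
  ext (v | e) (w | f)
  · simp [absMatrix]
  · simp [absMatrix, edgeIncMatrix_apply, hdeg]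
  · simp [absMatrix, edgeIncMatrix_apply, add_comm, hdeg]
  · simp [absMatrix]

end SimpleGraph

open SimpleGraph

theorem abs_charpoly_subdivision_general {V : Type*} [Fintype V] [DecidableEq V]
    (G : SimpleGraph V) [DecidableRel G.Adj]
    [DecidableRel (subdivisionGraph G).Adj]
    (r : ℕ) (hr : 1 ≤ r) (hreg : G.IsRegularOfDegree r)
    (n m : ℕ) (hn : n = Fintype.card V) (hm : m = G.edgeFinset.card) :
    X ^ n * (absMatrix (subdivisionGraph G)).charpoly =
      C (((r : ℝ) / ((r : ℝ) + 2)) ^ n) * X ^ m *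
        ((G.adjMatrix ℝ).charpoly).comp
          (C (((r : ℝ) + 2) / (r : ℝ)) * X ^ 2 - C ((r : ℝ)^2 / (r : ℝ))) := by
  have hr0 : (r : ℝ) ≠ 0 := Nat.cast_ne_zero.mpr (by omega)
  have ha : (r : ℝ) / (r + 2) ≠ 0 := by positivity
  have hBB : (√(r / (r + 2) : ℝ) • G.edgeIncMatrix ℝ) * (√(r / (r + 2) : ℝ) • (G.edgeIncMatrix ℝ)ᵀ)
      = ((r : ℝ) / (r + 2)) • (G.adjMatrix ℝ - scalar V (-r : ℝ)) := by
    rw [Matrix.smul_mul, Matrix.mul_smul, smul_smul, Real.mul_self_sqrt (by positivity),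
      edgeIncMatrix_mul_transpose, hreg.incMatrix_mul_transpose, map_neg, sub_neg_eq_add]
  rw [hreg.absMatrix_subdivisionGraph, hn, charpoly_fromBlocks_zero₁₁_zero₂₂, hBB,
    charpoly_smul _ ha, charpoly_sub_scalar, hm, G.edgeFinset_card]
  have hsubst : (X + C (-r : ℝ)).comp ((C ((r : ℝ) / (r + 2))⁻¹ * X).comp (X ^ 2)) =
      C (((r : ℝ) + 2) / r) * X ^ 2 - C ((r : ℝ) ^ 2 / r) := by
    rw [inv_div, pow_two (r : ℝ), mul_div_cancel_right₀ _ hr0]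
    simp [sub_eq_add_neg]
  rw [mul_comp, C_comp, comp_assoc, comp_assoc, hsubst]
  ring

/-- For an `r`-regular graph `G` on `n` vertices and `m` edges,
`φ(S(G) : μ) = (r/(r+2))^n · μ^{m−n} · ψ(G : (μ²(r+2) − r²)/r)`, stated here multiplied
through by `μ^n` so that only natural exponents appear. -/
theorem abs_charpoly_subdivision {V : Type*} [Fintype V] [DecidableEq V]
    (G : SimpleGraph V) [DecidableRel G.Adj]
    [Fintype (subdivisionGraph G).edgeSet] [DecidableRel (subdivisionGraph G).Adj]
    (r : ℕ) (hr : 1 ≤ r) (hreg : G.IsRegularOfDegree r)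
    (n m : ℕ) (hn : n = Fintype.card V) (hm : m = G.edgeFinset.card) :
    X ^ n * (absMatrix (subdivisionGraph G)).charpoly =
      C (((r : ℝ) / ((r : ℝ) + 2)) ^ n) * X ^ m *
        ((G.adjMatrix ℝ).charpoly).comp
          (C (((r : ℝ) + 2) / (r : ℝ)) * X ^ 2 - C ((r : ℝ)^2 / (r : ℝ))) :=
  abs_charpoly_subdivision_general G r hr hreg n m hn hm
end

section
/- For n ≥ 5, the ABS characteristic polynomial of the path P_n satisfies φ(P_n : μ) = μ²·Ω_{n−2} − (2/3)·μ·Ω_{n−3} + (1/9)·Ω_{n−4}, where the sequence Ω is defined by Ω_1 = μ, Ω_2 = μ² − 1/2, and Ω_m = μ·Ω_{m−1} − (1/2)·Ω_{m−2} for m ≥ 3. -/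
open Matrix Polynomial

/-- `Ω_m`: the determinant of the `m × m` tridiagonal matrix with `μ` on the diagonal and
`−√(1/2)` on the sub/super-diagonals, as a polynomial in `μ`; it satisfies `Ω_1 = μ`,
`Ω_2 = μ² − 1/2` and `Ω_m = μΩ_{m−1} − (1/2)Ω_{m−2}`. -/
noncomputable def OmegaPoly : ℕ → Polynomial ℝ
  | 0 => 1
  | 1 => X
  | (m + 2) => X * OmegaPoly (m + 1) - C (1 / 2 : ℝ) * OmegaPoly m

/-! `μ I - A(P_n)` is tridiagonal, so its determinant satisfies the continuant recurrence
`K_{k+2} = μ K_{k+1} - w_k K_k`, where `w_k` is the square of the ABS weight of the edge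
`{k, k+1}`: `1/3` on the two end edges and `1/2` elsewhere. With `w_0 = 1/3` and `w_k = 1/2`
afterwards, `K_{k+2} = μ Ω_{k+1} - (1/3) Ω_k` because both sides obey the recurrence of `Ω`; one
more step, with the other end weight `1/3`, gives the formula. -/

section Tridiagonal

variable {R : Type*} [CommRing R]

def tridiagonal (d a b : ℕ → R) (n : ℕ) : Matrix (Fin n) (Fin n) R :=
  Matrix.of fun i j =>
    if (i : ℕ) = j then d i
    else if (i : ℕ) + 1 = j then b i
    else if (j : ℕ) + 1 = i then a j
    else 0

def continuant (d q : ℕ → R) : ℕ → R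
  | 0 => 1
  | 1 => d 0
  | k + 2 => d (k + 1) * continuant d q (k + 1) - q k * continuant d q k

variable (d a b : ℕ → R)

@[simp]
lemma tridiagonal_submatrix_castSucc (n : ℕ) :
    (tridiagonal d a b (n + 1)).submatrix Fin.castSucc Fin.castSucc = tridiagonal d a b n := by
  ext i j
  simp [tridiagonal]

lemma tridiagonal_last_apply (k : ℕ) (j : Fin (k + 2)) :
    tridiagonal d a b (k + 2) (Fin.last (k + 1)) j =
      if j = Fin.last (k + 1) then d (k + 1) else if j = (Fin.last k).castSucc then a k else 0 := by
  simp only [tridiagonal, of_apply, Fin.ext_iff, Fin.val_last, Fin.val_castSucc]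
  grind

lemma tridiagonal_apply_last (k : ℕ) (i : Fin (k + 2)) :
    tridiagonal d a b (k + 2) i (Fin.last (k + 1)) =
      if i = Fin.last (k + 1) then d (k + 1) else if i = (Fin.last k).castSucc then b k else 0 := by
  simp only [tridiagonal, of_apply, Fin.ext_iff, Fin.val_last, Fin.val_castSucc]
  grind

lemma det_tridiagonal_submatrix_castSucc_succAbove (k : ℕ) :
    ((tridiagonal d a b (k + 2)).submatrix Fin.castSucc (Fin.last k).castSucc.succAbove).det =
      b k * (tridiagonal d a b k).det := by
  set M := (tridiagonal d a b (k + 2)).submatrix Fin.castSucc (Fin.last k).castSucc.succAbove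
  have hcol : ∀ i, M i (Fin.last k) = if i = Fin.last k then b k else 0 := by
    intro i
    simp [M, tridiagonal_apply_last]
  have hminor : M.submatrix Fin.castSucc Fin.castSucc = tridiagonal d a b k := by
    ext i j
    simp [M, tridiagonal, Fin.succAbove_castSucc_of_lt _ _ j.castSucc_lt_last]
  rw [det_succ_column M (Fin.last k),
    Fintype.sum_eq_single (Fin.last k) fun i hi => by simp [hcol, hi]]
  simp [hcol, hminor, ← two_mul]

theorem det_tridiagonal : ∀ n, (tridiagonal d a b n).det = continuant d (a * b) n
  | 0 => by simp [continuant]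
  | 1 => by simp [tridiagonal, continuant]
  | k + 2 => by
    rw [det_succ_row _ (Fin.last (k + 1)),
      Fintype.sum_eq_add (Fin.last (k + 1)) (Fin.last k).castSucc (by simp [Fin.ext_iff])
        (fun j hj => by simp [tridiagonal_last_apply, hj]),
      Fin.succAbove_last, det_tridiagonal_submatrix_castSucc_succAbove,
      tridiagonal_submatrix_castSucc, det_tridiagonal k, det_tridiagonal (k + 1)]
    simp only [Fin.val_last, Fin.val_castSucc, Even.add_self, Even.neg_pow, odd_add_one_self,
      Odd.neg_one_pow, one_pow, one_mul, neg_mul, tridiagonal_last_apply, ↓reduceIte, Fin.ext_iff,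
      Nat.left_eq_add, one_ne_zero, continuant, Pi.mul_apply]
    ring

end Tridiagonal

open SimpleGraph

lemma absMatrix_isSymm {V : Type*} [Fintype V] [DecidableEq V] (G : SimpleGraph V)
    [DecidableRel G.Adj] : (absMatrix G).IsSymm := by
  ext i j
  simp only [absMatrix, transpose_apply, of_apply, G.adj_comm, add_comm]

lemma pathGraph_degree {n : ℕ} [DecidableRel (pathGraph n).Adj] (i : Fin n) :
    (pathGraph n).degree i =
      (if (i : ℕ) + 1 = n then 0 else 1) + (if (i : ℕ) = 0 then 0 else 1) := by
  rw [← card_neighborFinset_eq_degree, neighborFinset_eq_filter]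
  simp only [pathGraph_adj, Finset.filter_or]
  rw [Finset.card_union_of_disjoint (Finset.disjoint_filter.mpr fun _ _ => by omega)]
  congr 1
  · split_ifs with h
    · exact Finset.card_eq_zero.mpr (Finset.filter_eq_empty_iff.mpr fun j _ => by omega)
    · refine Finset.card_eq_one.mpr ⟨⟨i + 1, by omega⟩, ?_⟩
      ext j
      simp only [Finset.mem_filter, Finset.mem_univ, true_and, Finset.mem_singleton, Fin.ext_iff]
      omega
  · split_ifs with h
    · exact Finset.card_eq_zero.mpr (Finset.filter_eq_empty_iff.mpr fun j _ => by omega)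
    · refine Finset.card_eq_one.mpr ⟨⟨i - 1, by omega⟩, ?_⟩
      ext j
      simp only [Finset.mem_filter, Finset.mem_univ, true_and, Finset.mem_singleton, Fin.ext_iff]
      omega

noncomputable def pathWeightSq (n i : ℕ) : ℝ := if i = 0 ∨ i + 2 = n then 1 / 3 else 1 / 2

lemma absMatrix_pathGraph_of_succ_eq {n : ℕ} (hn : 3 ≤ n) [DecidableRel (pathGraph n).Adj]
    {i j : Fin n} (hij : (i : ℕ) + 1 = j) :
    absMatrix (pathGraph n) i j = √(pathWeightSq n i) := by
  have := j.isLt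
  simp only [absMatrix, of_apply, pathGraph_adj.mpr (Or.inl hij), if_true, pathGraph_degree,
    pathWeightSq]
  congr 1
  split_ifs <;> first | omega | norm_num

lemma charmatrix_absMatrix_pathGraph {n : ℕ} (hn : 3 ≤ n) [DecidableRel (pathGraph n).Adj] :
    charmatrix (absMatrix (pathGraph n)) =
      tridiagonal (fun _ => X) (fun i => -C √(pathWeightSq n i))
        (fun i => -C √(pathWeightSq n i)) n := by
  ext i j
  by_cases hij : i = j
  · subst hij
    simp [charmatrix_apply_eq, absMatrix, tridiagonal]
  · rw [charmatrix_apply_ne _ _ _ hij]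
    simp only [tridiagonal, of_apply, Fin.val_eq_val, if_neg hij]
    split_ifs with hsucc hpred
    · rw [absMatrix_pathGraph_of_succ_eq hn hsucc]
    · rw [← absMatrix_isSymm _ |>.apply i j, absMatrix_pathGraph_of_succ_eq hn hpred]
    · simp [absMatrix, pathGraph_adj, hsucc, hpred]

lemma charpoly_absMatrix_pathGraph {n : ℕ} (hn : 3 ≤ n) [DecidableRel (pathGraph n).Adj] :
    (absMatrix (pathGraph n)).charpoly =
      continuant (fun _ => X) (fun i => C (pathWeightSq n i)) n := by
  rw [charpoly, charmatrix_absMatrix_pathGraph hn, det_tridiagonal]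
  congr
  ext1 i
  have : 0 ≤ pathWeightSq n i := by unfold pathWeightSq; split_ifs <;> norm_num
  simp [← C_mul, Real.mul_self_sqrt this]

lemma continuant_pathWeightSq {n : ℕ} :
    ∀ k, k + 3 ≤ n → continuant (fun _ => X) (fun i => C (pathWeightSq n i)) (k + 2) =
      X * OmegaPoly (k + 1) - C (1 / 3 : ℝ) * OmegaPoly k
  | 0, _ => by simp [continuant, pathWeightSq, OmegaPoly]
  | 1, hk => by
    simp only [continuant, pathWeightSq, OmegaPoly, zero_add, true_or, ↓reduceIte, one_ne_zero,
      Nat.reduceAdd, show 3 ≠ n by omega, or_self, mul_one]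
    ring
  | k + 2, hk => by
    have hmid : pathWeightSq n (k + 2) = 1 / 2 := if_neg (by omega)
    rw [continuant, continuant_pathWeightSq (k + 1) (by omega),
      continuant_pathWeightSq k (by omega), hmid]
    simp only [OmegaPoly]
    ring

/-- For `n ≥ 5`, the ABS characteristic polynomial of the path `P_n` satisfies
`φ(P_n : μ) = μ²Ω_{n−2} − (2/3)μΩ_{n−3} + (1/9)Ω_{n−4}`. -/
theorem abs_charpoly_path (n : ℕ) (hn : 5 ≤ n)
    [DecidableRel (SimpleGraph.pathGraph n).Adj] :
    (absMatrix (SimpleGraph.pathGraph n)).charpoly =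
      X ^ 2 * OmegaPoly (n - 2) - C (2 / 3 : ℝ) * X * OmegaPoly (n - 3) +
        C (1 / 9 : ℝ) * OmegaPoly (n - 4) := by
  obtain ⟨m, rfl⟩ : ∃ m, n = m + 5 := ⟨n - 5, by omega⟩
  have hend : pathWeightSq (m + 5) (m + 3) = 1 / 3 := if_pos (Or.inr rfl)
  have htwo : (C (2 / 3 : ℝ) : ℝ[X]) = C (1 / 3) + C (1 / 3) := by rw [← C_add]; norm_num
  have hnine : (C (1 / 9 : ℝ) : ℝ[X]) = C (1 / 3) * C (1 / 3) := by rw [← C_mul]; norm_num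
  rw [charpoly_absMatrix_pathGraph (by omega), continuant, hend,
    continuant_pathWeightSq (m + 2) (by omega), continuant_pathWeightSq (m + 1) (by omega),
    htwo, hnine]
  simp only [show m + 5 - 2 = m + 3 by omega, show m + 5 - 3 = m + 2 by omega,
    show m + 5 - 4 = m + 1 by omega]
  ring
end

section
/- Let G be an r-regular graph on n vertices. Then the ABS energy of the k-shadow graph D_k(G) satisfies E_ABS(D_k(G)) = k·√(1 − 1/(kr))·E_A(G), where E_A(G) is the ordinary (adjacency) energy of G. Equivalently, the ABS matrix of D_k(G) equals √((2kr−2)/(2kr))·(J_k ⊗ A(G)) where J_k is the all-ones k×k matrix, and its eigenvalues are √((2kr−2)/(2kr))·k·λ_j and 0, for adjacency eigenvalues λ_j of G. -/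
/-! The nonzero entries of the ABS matrix of `D_k(G)` all equal `c = √(1 - 1/(kr))`, since
`D_k(G)` is `kr`-regular; so that matrix is `(c J_k) ⊗ A(G)`. Diagonalising both factors of a
Kronecker product of Hermitian matrices shows that its eigenvalues are the pairwise products of
theirs, hence the sum of their absolute values is multiplicative. For the positive semidefinite
factor `c J_k` that sum is the trace `ck`. -/

open Matrix Polynomial

/-- The `k`-shadow graph `D_k(G)`: take `k` copies of `G` and join each vertex of copy `i`
to all neighbours of the corresponding vertex in copy `j`, for all `i, j`. -/
def shadowGraph {V : Type*} (k : ℕ) (G : SimpleGraph V) : SimpleGraph (Fin k × V) where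
  Adj x y := G.Adj x.2 y.2
  symm := ⟨fun _ _ h => G.adj_symm h⟩
  loopless := ⟨fun x h => G.irrefl (v := x.2) h⟩

instance {V : Type*} (k : ℕ) (G : SimpleGraph V) [DecidableRel G.Adj] :
    DecidableRel (shadowGraph k G).Adj := fun x y =>
  inferInstanceAs (Decidable (G.Adj x.2 y.2))

open Kronecker

namespace Matrix.IsHermitian

variable {𝕜 m n : Type*} [RCLike 𝕜] [Fintype m] [DecidableEq m] [Fintype n] [DecidableEq n]
  {A : Matrix m m 𝕜} {B : Matrix n n 𝕜}

theorem charpoly_kronecker (hA : A.IsHermitian) (hB : B.IsHermitian) :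
    (A ⊗ₖ B).charpoly =
      ∏ p : m × n, (X - C ((hA.eigenvalues p.1 * hB.eigenvalues p.2 : ℝ) : 𝕜)) := by
  set U : Matrix m m 𝕜 := (hA.eigenvectorUnitary : Matrix m m 𝕜)
  set V : Matrix n n 𝕜 := (hB.eigenvectorUnitary : Matrix n n 𝕜)
  have hU : star U * U = 1 := Unitary.coe_star_mul_self _
  have hV : star V * V = 1 := Unitary.coe_star_mul_self _
  have hAB : A ⊗ₖ B = (U ⊗ₖ V) * (diagonal (RCLike.ofReal ∘ hA.eigenvalues) ⊗ₖ
      diagonal (RCLike.ofReal ∘ hB.eigenvalues)) * (star U ⊗ₖ star V) := by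
    conv_lhs => rw [hA.spectral_theorem, hB.spectral_theorem]
    simp only [Unitary.conjStarAlgAut_apply, mul_kronecker_mul]
    rfl
  rw [hAB, charpoly_mul_comm, ← mul_assoc, ← mul_kronecker_mul, hU, hV, one_kronecker_one,
    one_mul, diagonal_kronecker_diagonal, charpoly_diagonal]
  simp

theorem sum_abs_eigenvalues_eq_of_charpoly_eq {ι : Type*} [Fintype ι] (hA : A.IsHermitian)
    {f : ι → ℝ} (h : A.charpoly = ∏ i, (X - C (f i : 𝕜))) :
    ∑ i, |hA.eigenvalues i| = ∑ i, |f i| := by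
  have hroots : Finset.univ.val.map hA.eigenvalues = Finset.univ.val.map f := by
    apply Multiset.map_injective (RCLike.ofReal_injective (K := 𝕜))
    rw [Multiset.map_map, ← hA.roots_charpoly_eq_eigenvalues, h, roots_prod]
    · simp
    · simp [Finset.prod_ne_zero_iff, X_sub_C_ne_zero]
  have := congrArg (fun s => (s.map abs).sum) hroots
  simpa only [Multiset.map_map, Function.comp_def, ← Finset.sum_eq_multiset_sum] using this

theorem sum_abs_eigenvalues_kronecker (hA : A.IsHermitian) (hB : B.IsHermitian)
    (hAB : (A ⊗ₖ B).IsHermitian) :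
    ∑ p, |hAB.eigenvalues p| = (∑ i, |hA.eigenvalues i|) * ∑ j, |hB.eigenvalues j| := by
  rw [hAB.sum_abs_eigenvalues_eq_of_charpoly_eq (hA.charpoly_kronecker hB), Finset.sum_mul_sum,
    ← Finset.univ_product_univ, Finset.sum_product]
  simp only [abs_mul]

end Matrix.IsHermitian

open scoped ComplexOrder in
theorem Matrix.PosSemidef.sum_abs_eigenvalues {𝕜 n : Type*} [RCLike 𝕜] [Fintype n]
    [DecidableEq n] {A : Matrix n n 𝕜} (hA : A.PosSemidef) :
    ∑ i, |hA.isHermitian.eigenvalues i| = RCLike.re A.trace := by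
  simp only [hA.isHermitian.trace_eq_sum_eigenvalues, map_sum, RCLike.ofReal_re,
    abs_of_nonneg (hA.eigenvalues_nonneg _)]

section ShadowGraph

variable {V : Type*} (k : ℕ) (G : SimpleGraph V) [DecidableRel G.Adj]

theorem shadowGraph_degree [Fintype V] (x : Fin k × V) :
    (shadowGraph k G).degree x = k * G.degree x.2 := by
  have : (shadowGraph k G).neighborFinset x = Finset.univ ×ˢ G.neighborFinset x.2 := by
    ext y
    simp only [SimpleGraph.mem_neighborFinset, Finset.mem_product, Finset.mem_univ, true_and]
    rfl
  rw [← SimpleGraph.card_neighborFinset_eq_degree, this, Finset.card_product, Finset.card_univ,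
    Fintype.card_fin, SimpleGraph.card_neighborFinset_eq_degree]

theorem SimpleGraph.IsRegularOfDegree.shadowGraph [Fintype V] {r : ℕ}
    (h : G.IsRegularOfDegree r) :
    (shadowGraph k G).IsRegularOfDegree (k * r) := fun x => by
  rw [shadowGraph_degree, h x.2]

theorem shadowGraph_adjMatrix (R : Type*) [MulZeroOneClass R] :
    (shadowGraph k G).adjMatrix R = of (fun _ _ : Fin k => (1 : R)) ⊗ₖ G.adjMatrix R := by
  ext x y
  simp only [SimpleGraph.adjMatrix_apply, kroneckerMap_apply, of_apply, one_mul]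
  rfl

end ShadowGraph

theorem absMatrix_eq_of_isRegularOfDegree {V : Type*} [Fintype V] [DecidableEq V]
    {G : SimpleGraph V} [DecidableRel G.Adj] {d : ℕ} (h : G.IsRegularOfDegree d) :
    absMatrix G = √(1 - 1 / (d : ℝ)) • G.adjMatrix ℝ := by
  ext i j
  have hdeg : 2 / ((G.degree i : ℝ) + G.degree j) = 1 / d := by
    rw [h i, h j, ← two_mul, div_mul_eq_div_div, div_self two_ne_zero]
  by_cases hij : G.Adj i j <;> simp [absMatrix, hij, hdeg]

/-- For an `r`-regular graph `G`, the ABS matrix of the `k`-shadow graph `D_k(G)` equals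
`√((2kr−2)/(2kr)) · (J_k ⊗ A(G))`, and the ABS energy satisfies
`E_ABS(D_k(G)) = k·√(1 − 1/(kr))·E_A(G)`. -/
theorem abs_energy_shadow {V : Type*} [Fintype V] [DecidableEq V]
    (G : SimpleGraph V) [DecidableRel G.Adj] (r k : ℕ) (hr : 1 ≤ r) (hk : 1 ≤ k)
    (hreg : G.IsRegularOfDegree r)
    (h1 : (absMatrix (shadowGraph k G)).IsHermitian)
    (h2 : (G.adjMatrix ℝ).IsHermitian) :
    absMatrix (shadowGraph k G) =
      Real.sqrt ((2 * (k : ℝ) * r - 2) / (2 * (k : ℝ) * r)) •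
        Matrix.kroneckerMap (· * ·) (Matrix.of fun _ _ : Fin k => (1 : ℝ))
          (G.adjMatrix ℝ) ∧
    ∑ i, |h1.eigenvalues i| =
      (k : ℝ) * Real.sqrt (1 - 1 / ((k : ℝ) * r)) * ∑ j, |h2.eigenvalues j| := by
  set c := √(1 - 1 / ((k : ℝ) * r))
  set J : Matrix (Fin k) (Fin k) ℝ := of fun _ _ => 1
  have hkr : (k : ℝ) * r ≠ 0 := by positivity
  have hc : √((2 * (k : ℝ) * r - 2) / (2 * (k : ℝ) * r)) = c := by
    congr 1
    field_simp
  have hM : absMatrix (shadowGraph k G) = (c • J) ⊗ₖ G.adjMatrix ℝ := by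
    rw [absMatrix_eq_of_isRegularOfDegree (hreg.shadowGraph k), shadowGraph_adjMatrix,
      smul_kronecker]
    push_cast
    rfl
  refine ⟨by rw [hM, hc, smul_kronecker], ?_⟩
  have hJ : (c • J).PosSemidef := by
    have hJ_eq : J = vecMulVec 1 (star 1) := by ext; simp [J, vecMulVec]
    exact (hJ_eq ▸ posSemidef_vecMulVec_self_star 1).smul (Real.sqrt_nonneg _)
  generalize absMatrix (shadowGraph k G) = M at h1 hM
  subst hM
  rw [IsHermitian.sum_abs_eigenvalues_kronecker hJ.isHermitian h2 h1, hJ.sum_abs_eigenvalues,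
    RCLike.re_to_real]
  simp [J, trace, mul_comm]
end

section
/- Let G be an r-regular graph on n vertices and let Spl_k(G) be its k-splitting graph. Then the ABS matrix of Spl_k(G) equals D ⊗ A(G), where D is the (k+1)×(k+1) matrix with (1,1) entry √((2r(k+1)−2)/(2r(k+1))), all other entries in the first row and first column equal to √((r(k+2)−2)/(r(k+2))), and all remaining entries 0; the nonzero eigenvalues of D are (1/2)(√((2r(k+1)−2)/(2r(k+1))) ± √((2r(k+1)−2)/(2r(k+1)) + 4k(r(k+2)−2)/(r(k+2)))), together with 0 of multiplicity k−1. -/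
open Matrix Polynomial

/-- The `k`-splitting graph `Spl_k(G)`: to each vertex `x` of `G` add `k` new vertices
`x_1, …, x_k`, each joined to every neighbour of `x` in `G`. -/
def splittingGraph {V : Type*} (k : ℕ) (G : SimpleGraph V) :
    SimpleGraph (V ⊕ (Fin k × V)) where
  Adj x y := match x, y with
    | Sum.inl u, Sum.inl v => G.Adj u v
    | Sum.inl u, Sum.inr p => G.Adj u p.2
    | Sum.inr p, Sum.inl v => G.Adj p.2 v
    | Sum.inr _, Sum.inr _ => False
  symm := ⟨by rintro (u | p) (v | q) h <;> simp_all <;> exact h.symm⟩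
  loopless := ⟨by rintro (u | p) h <;> simp_all⟩

instance {V : Type*} (k : ℕ) (G : SimpleGraph V) [DecidableRel G.Adj] :
    DecidableRel (splittingGraph k G).Adj := by
  rintro (u | p) (v | q) <;> simp only [splittingGraph] <;> infer_instance

/-!
The ABS weight of an edge depends only on the degrees of its ends. In `Spl_k(G)` with `G`
`r`-regular, an original vertex has degree `r(k+1)` and a new one degree `r`, so an edge between two
original vertices has weight `a`, an edge between an original and a new vertex weight `b`, and
there are no edges between new vertices: this is the pattern of `D ⊗ A(G)`.

For the characteristic polynomial, adding `b/X` times each of the last `k` columns of `X - D` to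
the first makes it upper triangular with diagonal `(X - a - kb²/X, X, …, X)`; clearing the
denominator gives `X · charpoly D = X^k (X² - aX - kb²)`, and the quadratic factor splits by the
quadratic formula.
-/

section Arrowhead

variable {R : Type*} [CommRing R]

def arrowheadMatrix (k : ℕ) (a b : R) : Matrix (Fin (k + 1)) (Fin (k + 1)) R :=
  of fun i j => if i = 0 ∧ j = 0 then a else if i = 0 ∨ j = 0 then b else 0

/-- Right multiplication by this matrix is the column operation `C₀ ← X • C₀ + b • (C₁ + ⋯ + Cₖ)`. -/
noncomputable def arrowheadColumnOp (k : ℕ) (b : R) : Matrix (Fin (k + 1)) (Fin (k + 1)) R[X] :=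
  of fun i j => if j = 0 then (if i = 0 then X else C b) else (if i = j then 1 else 0)

lemma det_arrowheadColumnOp (k : ℕ) (b : R) : (arrowheadColumnOp k b).det = X := by
  rw [det_of_isLowerTriangular]
  · simp [arrowheadColumnOp]
  · intro i j (hij : i < j)
    simp [arrowheadColumnOp, hij.ne, (Fin.zero_le i).trans_lt hij |>.ne']

lemma charmatrix_arrowheadMatrix_mul_columnOp_apply_zero (k : ℕ) (a b : R) (i : Fin (k + 1)) :
    (charmatrix (arrowheadMatrix k a b) * arrowheadColumnOp k b) i 0 =
      if i = 0 then X ^ 2 - C a * X - C (k * b ^ 2) else 0 := by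
  rw [mul_apply, Fin.sum_univ_succ]
  cases i using Fin.cases with
  | zero =>
    simp [arrowheadMatrix, arrowheadColumnOp, (Fin.succ_ne_zero _).symm]
    ring
  | succ i =>
    simp [charmatrix_apply, arrowheadMatrix, arrowheadColumnOp, Fin.succ_ne_zero, diagonal_apply]

lemma charmatrix_arrowheadMatrix_mul_columnOp_apply_of_ne_zero (k : ℕ) (a b : R) {j : Fin (k + 1)}
    (hj : j ≠ 0) (i : Fin (k + 1)) :
    (charmatrix (arrowheadMatrix k a b) * arrowheadColumnOp k b) i j =
      charmatrix (arrowheadMatrix k a b) i j := by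
  simp [mul_apply, arrowheadColumnOp, hj]

lemma charpoly_arrowheadMatrix_mul_X (k : ℕ) (a b : R) :
    (arrowheadMatrix k a b).charpoly * X = (X ^ 2 - C a * X - C (k * b ^ 2)) * X ^ k := by
  have htri : (charmatrix (arrowheadMatrix k a b) * arrowheadColumnOp k b).IsUpperTriangular := by
    intro i j (hji : j < i)
    have hi : i ≠ 0 := ((Fin.zero_le j).trans_lt hji).ne'
    by_cases hj : j = 0
    · simp [hj, charmatrix_arrowheadMatrix_mul_columnOp_apply_zero, hi]
    · rw [charmatrix_arrowheadMatrix_mul_columnOp_apply_of_ne_zero k a b hj,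
        charmatrix_apply_ne _ _ _ hji.ne']
      simp [arrowheadMatrix, hi, hj]
  have hdet := det_mul (charmatrix (arrowheadMatrix k a b)) (arrowheadColumnOp k b)
  rw [det_arrowheadColumnOp, det_of_isUpperTriangular htri, Fin.prod_univ_succ,
    charmatrix_arrowheadMatrix_mul_columnOp_apply_zero, if_pos rfl] at hdet
  rw [Matrix.charpoly, ← hdet]
  congr 1
  have hdiag (i : Fin k) :
      (charmatrix (arrowheadMatrix k a b) * arrowheadColumnOp k b) i.succ i.succ = X := by
    rw [charmatrix_arrowheadMatrix_mul_columnOp_apply_of_ne_zero k a b (Fin.succ_ne_zero i),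
      charmatrix_apply_eq]
    simp [arrowheadMatrix]
  simp [hdiag]

theorem charpoly_arrowheadMatrix {k : ℕ} (hk : k ≠ 0) (a b : R) :
    (arrowheadMatrix k a b).charpoly = X ^ (k - 1) * (X ^ 2 - C a * X - C (k * b ^ 2)) := by
  apply isRegular_X.right
  obtain ⟨m, rfl⟩ := Nat.exists_eq_succ_of_ne_zero hk
  simp only [charpoly_arrowheadMatrix_mul_X, Nat.succ_sub_one, pow_succ]
  ring

end Arrowhead

theorem X_sq_sub_C_mul_X_sub_C_eq {K : Type*} [Field K] [NeZero (2 : K)] {a c s : K}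
    (hs : s ^ 2 = a ^ 2 + 4 * c) :
    X ^ 2 - C a * X - C c = (X - C ((a + s) / 2)) * (X - C ((a - s) / 2)) := by
  have hsum : (a + s) / 2 + (a - s) / 2 = a := by field_simp; ring
  have hprod : -((a + s) / 2 * ((a - s) / 2)) = c := by field_simp; linear_combination hs
  calc X ^ 2 - C a * X - C c
      = X ^ 2 - C ((a + s) / 2 + (a - s) / 2) * X - C (-((a + s) / 2 * ((a - s) / 2))) := by
        rw [hsum, hprod]
    _ = (X - C ((a + s) / 2)) * (X - C ((a - s) / 2)) := by
        simp only [C_add, C_neg, C_mul]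
        ring

theorem absMatrix_apply_eq_ite {V : Type*} [Fintype V] [DecidableEq V] {G : SimpleGraph V}
    [DecidableRel G.Adj] {i j : V} {d : ℝ}
    (hd : G.Adj i j → (G.degree i + G.degree j : ℝ) = d) :
    absMatrix G i j = if G.Adj i j then √((d - 2) / d) else 0 := by
  by_cases h : G.Adj i j
  · have hpos : 0 < G.degree i := G.degree_pos_iff_exists_adj i |>.2 ⟨j, h⟩
    have hd0 : d ≠ 0 := by rw [← hd h]; positivity
    rw [absMatrix, of_apply, if_pos h, if_pos h, hd h, one_sub_div hd0]
  · rw [absMatrix, of_apply, if_neg h, if_neg h]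

section Splitting

variable {V : Type*} (k : ℕ) (G : SimpleGraph V)

@[simp] lemma splittingGraph_adj_inl_inl (u v : V) :
    (splittingGraph k G).Adj (.inl u) (.inl v) ↔ G.Adj u v := .rfl

@[simp] lemma splittingGraph_adj_inl_inr (u : V) (p : Fin k × V) :
    (splittingGraph k G).Adj (.inl u) (.inr p) ↔ G.Adj u p.2 := .rfl

@[simp] lemma splittingGraph_adj_inr_inl (p : Fin k × V) (v : V) :
    (splittingGraph k G).Adj (.inr p) (.inl v) ↔ G.Adj p.2 v := .rfl

@[simp] lemma splittingGraph_not_adj_inr_inr (p q : Fin k × V) :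
    ¬ (splittingGraph k G).Adj (.inr p) (.inr q) := id

variable [Fintype V] [DecidableRel G.Adj]

lemma splittingGraph_neighborFinset_inl (u : V) :
    (splittingGraph k G).neighborFinset (.inl u) =
      (G.neighborFinset u).disjSum (Finset.univ ×ˢ G.neighborFinset u) := by
  ext (v | p) <;> simp

lemma splittingGraph_neighborFinset_inr (p : Fin k × V) :
    (splittingGraph k G).neighborFinset (.inr p) =
      (G.neighborFinset p.2).map .inl := by
  ext (v | q) <;> simp

lemma splittingGraph_degree_inl (u : V) :
    (splittingGraph k G).degree (.inl u) = (k + 1) * G.degree u := by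
  simp [← SimpleGraph.card_neighborFinset_eq_degree, splittingGraph_neighborFinset_inl]
  ring

lemma splittingGraph_degree_inr (p : Fin k × V) :
    (splittingGraph k G).degree (.inr p) = G.degree p.2 := by
  simp [← SimpleGraph.card_neighborFinset_eq_degree, splittingGraph_neighborFinset_inr]

end Splitting

def splittingIndex {V : Type*} (k : ℕ) : V ⊕ (Fin k × V) → Fin (k + 1) × V :=
  Sum.elim (fun v => (0, v)) (fun p => (p.1.succ, p.2))

theorem absMatrix_splittingGraph {V : Type*} [Fintype V] [DecidableEq V] {G : SimpleGraph V}
    [DecidableRel G.Adj] {r : ℕ} (hreg : G.IsRegularOfDegree r) (k : ℕ) :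
    absMatrix (splittingGraph k G) =
      (kroneckerMap (· * ·)
        (arrowheadMatrix k √((2 * r * (k + 1) - 2) / (2 * r * (k + 1)))
          √((r * (k + 2) - 2) / (r * (k + 2))))
        (G.adjMatrix ℝ)).submatrix (splittingIndex k) (splittingIndex k) := by
  ext (u | p) (v | q) <;>
    simp only [submatrix_apply, kroneckerMap_apply, splittingIndex, Sum.elim_inl, Sum.elim_inr,
      arrowheadMatrix, of_apply, SimpleGraph.adjMatrix_apply]
  · rw [absMatrix_apply_eq_ite (d := 2 * r * (k + 1)) fun _ => by
      simp [splittingGraph_degree_inl, hreg.degree_eq]; ring]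
    simp
  · rw [absMatrix_apply_eq_ite (d := r * (k + 2)) fun _ => by
      simp [splittingGraph_degree_inl, splittingGraph_degree_inr, hreg.degree_eq]; ring]
    simp [Fin.succ_ne_zero]
  · rw [absMatrix_apply_eq_ite (d := r * (k + 2)) fun _ => by
      simp [splittingGraph_degree_inl, splittingGraph_degree_inr, hreg.degree_eq]; ring]
    simp [Fin.succ_ne_zero]
  · simp [absMatrix, Fin.succ_ne_zero]

theorem abs_matrix_splitting_general {V : Type*} [Fintype V] [DecidableEq V]
    (G : SimpleGraph V) [DecidableRel G.Adj] (r k : ℕ) (hk : 1 ≤ k)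
    (hreg : G.IsRegularOfDegree r)
    (a b : ℝ)
    (ha : a = Real.sqrt ((2 * (r : ℝ) * ((k : ℝ) + 1) - 2) / (2 * (r : ℝ) * ((k : ℝ) + 1))))
    (hb : b = Real.sqrt (((r : ℝ) * ((k : ℝ) + 2) - 2) / ((r : ℝ) * ((k : ℝ) + 2))))
    (D : Matrix (Fin (k + 1)) (Fin (k + 1)) ℝ)
    (hD : D = Matrix.of fun i j =>
      if i = 0 ∧ j = 0 then a else if i = 0 ∨ j = 0 then b else 0) :
    absMatrix (splittingGraph k G) =
      (Matrix.kroneckerMap (· * ·) D (G.adjMatrix ℝ)).submatrix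
        (Sum.elim (fun v => ((0 : Fin (k + 1)), v)) (fun p => (p.1.succ, p.2)))
        (Sum.elim (fun v => ((0 : Fin (k + 1)), v)) (fun p => (p.1.succ, p.2))) ∧
    D.charpoly = X ^ (k - 1) *
      (X - C ((a + Real.sqrt (a ^ 2 + 4 * (k : ℝ) * b ^ 2)) / 2)) *
      (X - C ((a - Real.sqrt (a ^ 2 + 4 * (k : ℝ) * b ^ 2)) / 2)) := by
  change D = arrowheadMatrix k a b at hD
  subst hD
  refine ⟨by subst ha hb; exact absMatrix_splittingGraph hreg k, ?_⟩
  have hs : √(a ^ 2 + 4 * k * b ^ 2) ^ 2 = a ^ 2 + 4 * (k * b ^ 2) := by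
    rw [Real.sq_sqrt (by positivity)]; ring
  rw [charpoly_arrowheadMatrix (by omega), X_sq_sub_C_mul_X_sub_C_eq hs]
  exact (mul_assoc _ _ _).symm

/-- For an `r`-regular graph `G`, the ABS matrix of `Spl_k(G)` equals `D ⊗ A(G)` (up to the
canonical identification of `V ⊕ (Fin k × V)` with `Fin (k+1) × V`), where `D` is the
arrowhead matrix with `(0,0)` entry `a = √((2r(k+1)−2)/(2r(k+1)))`, remaining first row and
column entries `b = √((r(k+2)−2)/(r(k+2)))`, and `0` elsewhere; the nonzero eigenvalues of
`D` are `(a ± √(a² + 4kb²))/2`, with `0` of multiplicity `k−1`. -/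
theorem abs_matrix_splitting {V : Type*} [Fintype V] [DecidableEq V]
    (G : SimpleGraph V) [DecidableRel G.Adj] (r k : ℕ) (hr : 1 ≤ r) (hk : 1 ≤ k)
    (hreg : G.IsRegularOfDegree r)
    (a b : ℝ)
    (ha : a = Real.sqrt ((2 * (r : ℝ) * ((k : ℝ) + 1) - 2) / (2 * (r : ℝ) * ((k : ℝ) + 1))))
    (hb : b = Real.sqrt (((r : ℝ) * ((k : ℝ) + 2) - 2) / ((r : ℝ) * ((k : ℝ) + 2))))
    (D : Matrix (Fin (k + 1)) (Fin (k + 1)) ℝ)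
    (hD : D = Matrix.of fun i j =>
      if i = 0 ∧ j = 0 then a else if i = 0 ∨ j = 0 then b else 0) :
    absMatrix (splittingGraph k G) =
      (Matrix.kroneckerMap (· * ·) D (G.adjMatrix ℝ)).submatrix
        (Sum.elim (fun v => ((0 : Fin (k + 1)), v)) (fun p => (p.1.succ, p.2)))
        (Sum.elim (fun v => ((0 : Fin (k + 1)), v)) (fun p => (p.1.succ, p.2))) ∧
    D.charpoly = X ^ (k - 1) *
      (X - C ((a + Real.sqrt (a ^ 2 + 4 * (k : ℝ) * b ^ 2)) / 2)) *
      (X - C ((a - Real.sqrt (a ^ 2 + 4 * (k : ℝ) * b ^ 2)) / 2)) :=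
  abs_matrix_splitting_general G r k hk hreg a b ha hb D hD
end

section
/- Let G be a connected graph of order n ≥ 4 with ABS eigenvalues μ_1,…,μ_n and modified second Zagreb index R_{−1}(G) = Σ_{v_i v_j ∈ E(G)} 1/(d_i d_j). Then Σ_{i=1}^n μ_i² ≤ (n−1)(n − 2R_{−1}(G)). -/
/-!
The sum of the squared eigenvalues of the symmetric matrix `A = absMatrix G` is
`trace (A * A) = ∑ (1 - 2 / (dᵢ + dⱼ))` over ordered pairs of adjacent vertices. If every degree
is at most `c`, then `2 dᵢ dⱼ ≤ c (dᵢ + dⱼ)`, which bounds each term by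
`c (1 / (2 dᵢ) + 1 / (2 dⱼ) - 1 / (dᵢ dⱼ))`. Summing, `∑ 1 / dᵢ` over these pairs counts each
non-isolated vertex once, so the total is at most `c (n - 2 R₋₁(G))`; take `c = n - 1`.
-/

open Matrix

theorem Matrix.IsHermitian.trace_mul_self {𝕜 n : Type*} [RCLike 𝕜] [Fintype n] [DecidableEq n]
    {A : Matrix n n 𝕜} (hA : A.IsHermitian) :
    (A * A).trace = ∑ i, (hA.eigenvalues i : 𝕜) ^ 2 := by
  conv_lhs => rw [hA.spectral_theorem, ← map_mul, Unitary.conjStarAlgAut_apply, trace_mul_cycle,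
    Unitary.coe_star_mul_self, one_mul, diagonal_mul_diagonal, trace_diagonal]
  simp [sq]

lemma one_sub_two_div_add_le {a b c : ℝ} (ha : 1 ≤ a) (hb : 1 ≤ b) (hac : a ≤ c) (hbc : b ≤ c) :
    1 - 2 / (a + b) ≤ 2⁻¹ * (c / a + c / b) - c / (a * b) := by
  have hl : 1 - 2 / (a + b) = (a + b - 2) / (a + b) := by field_simp
  have hr : 2⁻¹ * (c / a + c / b) - c / (a * b) = c * (a + b - 2) / (2 * (a * b)) := by
    field_simp; ring
  rw [hl, hr, div_le_div_iff₀ (by positivity) (by positivity)]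
  have key : 2 * (a * b) ≤ c * (a + b) := by nlinarith
  nlinarith [mul_le_mul_of_nonneg_left key (show 0 ≤ a + b - 2 by linarith)]

namespace SimpleGraph

variable {V : Type*} [Fintype V] (G : SimpleGraph V) [DecidableRel G.Adj]

/-- Each edge contributes twice, once in each orientation. -/
def adjSum (f : V → V → ℝ) : ℝ := ∑ i, ∑ j, if G.Adj i j then f i j else 0

variable {G}

lemma adjSum_add (f g : V → V → ℝ) :
    G.adjSum (fun i j => f i j + g i j) = G.adjSum f + G.adjSum g := by
  simp only [adjSum, ite_add_zero, Finset.sum_add_distrib]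

lemma adjSum_sub (f g : V → V → ℝ) :
    G.adjSum (fun i j => f i j - g i j) = G.adjSum f - G.adjSum g := by
  simp only [adjSum, ← Finset.sum_sub_distrib]
  congr! 2 with i - j -
  split_ifs <;> simp

lemma adjSum_const_mul (c : ℝ) (f : V → V → ℝ) :
    G.adjSum (fun i j => c * f i j) = c * G.adjSum f := by
  simp only [adjSum, Finset.mul_sum, mul_ite_zero]

lemma adjSum_le_adjSum {f g : V → V → ℝ} (h : ∀ i j, G.Adj i j → f i j ≤ g i j) :
    G.adjSum f ≤ G.adjSum g :=
  Finset.sum_le_sum fun i _ => Finset.sum_le_sum fun j _ => by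
    split_ifs with hij
    exacts [h i j hij, le_rfl]

lemma adjSum_comm (f : V → V → ℝ) : G.adjSum (fun i j => f j i) = G.adjSum f := by
  rw [adjSum, Finset.sum_comm]
  simp only [adjSum, G.adj_comm]

lemma adjSum_eq_sum_degree_mul [DecidableEq V] (g : V → ℝ) :
    G.adjSum (fun i _ => g i) = ∑ i, G.degree i * g i := by
  simp only [adjSum, ← Finset.sum_filter, Finset.sum_const, nsmul_eq_mul,
    ← neighborFinset_eq_filter, card_neighborFinset_eq_degree]

lemma adjSum_div_degree_le [DecidableEq V] {c : ℝ} (hc : ∀ i, (G.degree i : ℝ) ≤ c) :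
    G.adjSum (fun i _ => c / G.degree i) ≤ Fintype.card V * c := by
  rw [adjSum_eq_sum_degree_mul, ← nsmul_eq_mul, ← Finset.card_univ, ← Finset.sum_const]
  refine Finset.sum_le_sum fun i _ => ?_
  rcases eq_or_ne (G.degree i : ℝ) 0 with h | h
  · simpa [h] using hc i
  · rw [mul_div_cancel₀ _ h]

end SimpleGraph

open SimpleGraph

lemma trace_absMatrix_mul_self {V : Type*} [Fintype V] [DecidableEq V] (G : SimpleGraph V)
    [DecidableRel G.Adj] :
    (absMatrix G * absMatrix G).trace =
      G.adjSum fun i j => 1 - 2 / ((G.degree i : ℝ) + G.degree j) := by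
  refine Finset.sum_congr rfl fun i _ => Finset.sum_congr rfl fun j _ => ?_
  by_cases hij : G.Adj i j
  · have hi : (1 : ℝ) ≤ G.degree i := by exact_mod_cast hij.degree_pos_left
    have hj : (1 : ℝ) ≤ G.degree j := by exact_mod_cast hij.degree_pos_right
    simp only [absMatrix, of_apply, if_pos hij, if_pos hij.symm]
    rw [add_comm (G.degree j : ℝ), Real.mul_self_sqrt]
    rw [sub_nonneg, div_le_one (by positivity)]
    linarith
  · simp [absMatrix, hij]

theorem absMatrix_sum_eigenvalues_sq_le {V : Type*} [Fintype V] [DecidableEq V]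
    (G : SimpleGraph V) [DecidableRel G.Adj] (hA : (absMatrix G).IsHermitian) {c : ℝ}
    (hc : ∀ i, (G.degree i : ℝ) ≤ c) :
    ∑ i, hA.eigenvalues i ^ 2 ≤
      c * (Fintype.card V - G.adjSum fun i j => 1 / ((G.degree i : ℝ) * G.degree j)) := by
  have hterm := fun i j (hij : G.Adj i j) =>
    one_sub_two_div_add_le (c := c) (by exact_mod_cast hij.degree_pos_left)
      (by exact_mod_cast hij.degree_pos_right) (hc i) (hc j)
  calc ∑ i, hA.eigenvalues i ^ 2
      = G.adjSum fun i j => 1 - 2 / ((G.degree i : ℝ) + G.degree j) := by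
        rw [← trace_absMatrix_mul_self, hA.trace_mul_self]; simp
    _ ≤ G.adjSum fun i j =>
          2⁻¹ * (c / G.degree i + c / G.degree j) - c / ((G.degree i : ℝ) * G.degree j) :=
        adjSum_le_adjSum hterm
    _ = G.adjSum (fun i _ => c / G.degree i) -
          c * G.adjSum fun i j => 1 / ((G.degree i : ℝ) * G.degree j) := by
        rw [adjSum_sub, adjSum_const_mul, adjSum_add, adjSum_comm fun i _ => c / G.degree i,
          ← adjSum_const_mul]
        simp only [mul_one_div]
        ring
    _ ≤ c * (Fintype.card V - G.adjSum fun i j => 1 / ((G.degree i : ℝ) * G.degree j)) := by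
        linarith [adjSum_div_degree_le hc]

theorem abs_eigenvalues_sq_sum_le_general (n : ℕ) (G : SimpleGraph (Fin n))
    [DecidableRel G.Adj]
    (hherm : (absMatrix G).IsHermitian)
    (R : ℝ)
    (hR : R = (1 / 2) * ∑ i : Fin n, ∑ j : Fin n,
      if G.Adj i j then 1 / ((G.degree i : ℝ) * (G.degree j : ℝ)) else 0) :
    ∑ i, (hherm.eigenvalues i) ^ 2 ≤ ((n : ℝ) - 1) * ((n : ℝ) - 2 * R) := by
  have hdeg (i : Fin n) : (G.degree i : ℝ) ≤ n - 1 := by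
    rw [le_sub_iff_add_le]
    exact_mod_cast Fintype.card_fin n ▸ G.degree_lt_card_verts i
  have h2R : 2 * R = G.adjSum fun i j => 1 / ((G.degree i : ℝ) * G.degree j) := by
    rw [hR, adjSum]; ring
  simpa [h2R] using absMatrix_sum_eigenvalues_sq_le G hherm hdeg

/-- For a connected graph `G` of order `n ≥ 4` with ABS eigenvalues `μ_1, …, μ_n` and
modified second Zagreb index `R_{−1}(G) = Σ_{edges} 1/(d_i d_j)`:
`Σ μ_i² ≤ (n−1)(n − 2R_{−1}(G))`. -/
theorem abs_eigenvalues_sq_sum_le (n : ℕ) (hn : 4 ≤ n) (G : SimpleGraph (Fin n))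
    [DecidableRel G.Adj] (hconn : G.Connected)
    (hherm : (absMatrix G).IsHermitian)
    (R : ℝ)
    (hR : R = (1 / 2) * ∑ i : Fin n, ∑ j : Fin n,
      if G.Adj i j then 1 / ((G.degree i : ℝ) * (G.degree j : ℝ)) else 0) :
    ∑ i, (hherm.eigenvalues i) ^ 2 ≤ ((n : ℝ) - 1) * ((n : ℝ) - 2 * R) :=
  abs_eigenvalues_sq_sum_le_general n G hherm R hR
end
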